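/- arXiv:2505.06220 — 2 statements merged into one kernel-verified Lean document; each statement's English description precedes it below -/
import Mathlib

section
/- Let U ⊆ ℝⁿ be open and let c^i_{jk}, e^i, Γ^i_{jk}, ω_i be smooth functions on U such that: Γ^i_{jk} = Γ^i_{kj}; c^i_{jk} = c^i_{kj}; c is associative, i.e. Σ_s c^s_{ij} c^t_{sk} = Σ_s c^s_{jk} c^t_{si} for all i,j,k,t; and e is a unit for c, i.e. Σ_k c^i_{jk} e^k = δ^i_j. Define ∇_jω_i := ∂_jω_i − Σ_s Γ^s_{ji} ω_s. Then the following are equivalent: (A) Σ_s c^s_{kj} ∇_sω_i = Σ_s c^s_{ij} ∇_sω_k for all i, j, k; (B) ∇_jω_i = Σ_{s,t} c^s_{ij} e^t ∇_sω_t for all i, j. Moreover, any ω satisfying (B) is closed: ∂_jω_i = ∂_iω_j for all i, j (hence locally ω_i = ∂_i h for some function h). -/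
open scoped BigOperators

/-- The coordinate space `ℝⁿ`. -/
abbrev Vec (n : ℕ) : Type := Fin n → ℝ

/-- Partial derivative `∂_i f` at `x`. -/
noncomputable def pd {n : ℕ} (i : Fin n) (f : Vec n → ℝ) (x : Vec n) : ℝ :=
  fderiv ℝ f x (Pi.single i 1)

/-- For a commutative associative product `c` with unit `e` and a
torsionless connection `Γ`, the system (A) `c^s_{kj}∇_sω_i = c^s_{ij}∇_sω_k` is
equivalent to its reduced form (B) `∇_jω_i = c^s_{ij} e^t ∇_sω_t`, and every
solution of (B) is a closed 1-form. -/
theorem statement9 {n : ℕ} (U : Set (Vec n)) (hU : IsOpen U)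
    (c : Fin n → Fin n → Fin n → Vec n → ℝ)
    (e : Fin n → Vec n → ℝ)
    (Γ : Fin n → Fin n → Fin n → Vec n → ℝ)
    (ω : Fin n → Vec n → ℝ)
    (hc : ∀ i j k, ContDiffOn ℝ (⊤ : ℕ∞) (c i j k) U)
    (he : ∀ i, ContDiffOn ℝ (⊤ : ℕ∞) (e i) U)
    (hΓ : ∀ i j k, ContDiffOn ℝ (⊤ : ℕ∞) (Γ i j k) U)
    (hω : ∀ i, ContDiffOn ℝ (⊤ : ℕ∞) (ω i) U)
    (hΓsym : ∀ i j k, Γ i j k = Γ i k j)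
    (hcsym : ∀ i j k, c i j k = c i k j)
    (hassoc : ∀ i j k t, ∀ x ∈ U,
      (∑ s, c s i j x * c t s k x) = ∑ s, c s j k x * c t s i x)
    (hunit : ∀ i j, ∀ x ∈ U,
      (∑ k, c i j k x * e k x) = if i = j then 1 else 0) :
    ((∀ i j k, ∀ x ∈ U,
        (∑ s, c s k j x * (pd s (ω i) x - ∑ u, Γ u s i x * ω u x))
          = ∑ s, c s i j x * (pd s (ω k) x - ∑ u, Γ u s k x * ω u x))
      ↔ (∀ i j, ∀ x ∈ U,
        pd j (ω i) x - ∑ s, Γ s j i x * ω s x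
          = ∑ s, ∑ t, c s i j x * e t x * (pd s (ω t) x - ∑ u, Γ u s t x * ω u x)))
    ∧ ((∀ i j, ∀ x ∈ U,
        pd j (ω i) x - ∑ s, Γ s j i x * ω s x
          = ∑ s, ∑ t, c s i j x * e t x * (pd s (ω t) x - ∑ u, Γ u s t x * ω u x)) →
      ∀ i j, ∀ x ∈ U, pd j (ω i) x = pd i (ω j) x) := by
  -- contraction with the unit vector field
  have contract : ∀ x ∈ U, ∀ (F : Fin n → ℝ) (a : Fin n),
      (∑ m, e m x * ∑ s, c s a m x * F s) = F a := by
    intro x hx F a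
    simp only [Finset.mul_sum]
    rw [Finset.sum_comm]
    have h1 : ∀ s : Fin n, (∑ m, e m x * (c s a m x * F s))
        = (if s = a then (1:ℝ) else 0) * F s := by
      intro s
      rw [← hunit s a x hx, Finset.sum_mul]
      exact Finset.sum_congr rfl fun m _ => by ring
    rw [Finset.sum_congr rfl fun s _ => h1 s]
    simp
  -- (A) → (B)
  have hAB : (∀ i j k, ∀ x ∈ U,
        (∑ s, c s k j x * (pd s (ω i) x - ∑ u, Γ u s i x * ω u x))
          = ∑ s, c s i j x * (pd s (ω k) x - ∑ u, Γ u s k x * ω u x)) →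
      (∀ i j, ∀ x ∈ U,
        pd j (ω i) x - ∑ s, Γ s j i x * ω s x
          = ∑ s, ∑ t, c s i j x * e t x * (pd s (ω t) x - ∑ u, Γ u s t x * ω u x)) := by
    intro hA i j x hx
    let N : Fin n → Fin n → ℝ := fun t s => pd s (ω t) x - ∑ u, Γ u s t x * ω u x
    have hA' : ∀ a b k, (∑ s, c s k b x * N a s) = ∑ s, c s a b x * N k s :=
      fun a b k => hA a b k x hx
    show N i j = ∑ s, ∑ t, c s i j x * e t x * N t s
    calc N i j = ∑ m, e m x * ∑ s, c s j m x * N i s := (contract x hx (N i) j).symm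
      _ = ∑ m, e m x * ∑ s, c s m j x * N i s := by
          refine Finset.sum_congr rfl fun m _ => ?_
          congr 1
          exact Finset.sum_congr rfl fun s _ => by rw [hcsym s j m]
      _ = ∑ m, e m x * ∑ s, c s i j x * N m s := by
          refine Finset.sum_congr rfl fun m _ => ?_
          rw [hA' i j m]
      _ = ∑ s, ∑ t, c s i j x * e t x * N t s := by
          simp only [Finset.mul_sum]
          rw [Finset.sum_comm]
          exact Finset.sum_congr rfl fun s _ => Finset.sum_congr rfl fun m _ => by ring
  -- (B) → (A)
  have hBA : (∀ i j, ∀ x ∈ U,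
        pd j (ω i) x - ∑ s, Γ s j i x * ω s x
          = ∑ s, ∑ t, c s i j x * e t x * (pd s (ω t) x - ∑ u, Γ u s t x * ω u x)) →
      (∀ i j k, ∀ x ∈ U,
        (∑ s, c s k j x * (pd s (ω i) x - ∑ u, Γ u s i x * ω u x))
          = ∑ s, c s i j x * (pd s (ω k) x - ∑ u, Γ u s k x * ω u x)) := by
    intro hB i j k x hx
    let N : Fin n → Fin n → ℝ := fun t s => pd s (ω t) x - ∑ u, Γ u s t x * ω u x
    have hB' : ∀ a b, N a b = ∑ s, ∑ t, c s a b x * e t x * N t s :=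
      fun a b => hB a b x hx
    have expand : ∀ p q r, (∑ s, c s p q x * N r s)
        = ∑ u, ∑ t, (∑ s, c s p q x * c u s r x) * (e t x * N t u) := by
      intro p q r
      calc (∑ s, c s p q x * N r s)
          = ∑ s, c s p q x * (∑ u, ∑ t, c u r s x * e t x * N t u) :=
            Finset.sum_congr rfl fun s _ => by rw [hB' r s]
        _ = ∑ u, ∑ t, (∑ s, c s p q x * c u s r x) * (e t x * N t u) := by
            simp only [Finset.mul_sum]
            rw [Finset.sum_comm]
            refine Finset.sum_congr rfl fun u _ => ?_
            rw [Finset.sum_comm]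
            refine Finset.sum_congr rfl fun t _ => ?_
            rw [Finset.sum_mul]
            refine Finset.sum_congr rfl fun s _ => ?_
            rw [hcsym u r s]
            ring
    show (∑ s, c s k j x * N i s) = ∑ s, c s i j x * N k s
    rw [expand k j i, expand i j k]
    refine Finset.sum_congr rfl fun u _ => Finset.sum_congr rfl fun t _ => ?_
    congr 1
    rw [hassoc k j i u x hx]
    exact Finset.sum_congr rfl fun s _ => by rw [hcsym s j i]
  refine ⟨⟨hAB, hBA⟩, ?_⟩
  -- (B) → closedness
  intro hB i j x hx
  have hA := hBA hB
  let N : Fin n → Fin n → ℝ := fun t s => pd s (ω t) x - ∑ u, Γ u s t x * ω u x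
  have hA' : ∀ a b k, (∑ s, c s k b x * N a s) = ∑ s, c s a b x * N k s :=
    fun a b k => hA a b k x hx
  have sym : N i j = N j i := by
    calc N i j = ∑ m, e m x * ∑ s, c s j m x * N i s := (contract x hx (N i) j).symm
      _ = ∑ m, e m x * ∑ s, c s i m x * N j s :=
          Finset.sum_congr rfl fun m _ => by rw [hA' i m j]
      _ = N j i := contract x hx (N j) i
  have sym' : pd j (ω i) x - ∑ u, Γ u j i x * ω u x
      = pd i (ω j) x - ∑ u, Γ u i j x * ω u x := sym
  have hG : (∑ u, Γ u j i x * ω u x) = ∑ u, Γ u i j x * ω u x :=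
    Finset.sum_congr rfl fun u _ => by rw [hΓsym u j i]
  linarith [sym', hG]
end

section
/- Let U ⊆ ℝⁿ be open and let c^i_{jk}, X^k, W^l_m, Γ^l_{ij}, Γ̃^l_{ij} be smooth functions on U with Γ and Γ̃ symmetric in their lower indices, c^i_{jk} = c^i_{kj}, and c associative (Σ_s c^s_{ij} c^t_{sk} = Σ_s c^s_{jk} c^t_{si}). Set V^i_j := Σ_k c^i_{jk} X^k, and suppose the difference tensor satisfies Γ̃^l_{ij} − Γ^l_{ij} = Σ_m c^m_{ij} W^l_m. Define ∇_kV^i_j := ∂_kV^i_j + Σ_s (Γ^i_{ks}V^s_j − Γ^s_{kj}V^i_s) and ∇̃_kV^i_j analogously with Γ̃. Then ∇_kV^i_j = ∇_jV^i_k for all i, j, k if and only if ∇̃_kV^i_j = ∇̃_jV^i_k for all i, j, k. -/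
open scoped BigOperators

/-- If two torsionless connections differ by a `(1,2)`-tensor of
the form `c^m_{ij} W^l_m`, then for `V = X∘` (i.e. `V^i_j = c^i_{jk}X^k`) the
symmetry condition `∇_kV^i_j = ∇_jV^i_k` holds for one connection iff it holds
for the other. -/
theorem statement11 {n : ℕ} (U : Set (Vec n)) (hU : IsOpen U)
    (c : Fin n → Fin n → Fin n → Vec n → ℝ)
    (X : Fin n → Vec n → ℝ)
    (W : Fin n → Fin n → Vec n → ℝ)
    (Γ : Fin n → Fin n → Fin n → Vec n → ℝ)
    (Γt : Fin n → Fin n → Fin n → Vec n → ℝ)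
    (hc : ∀ i j k, ContDiffOn ℝ (⊤ : ℕ∞) (c i j k) U)
    (hX : ∀ i, ContDiffOn ℝ (⊤ : ℕ∞) (X i) U)
    (hW : ∀ i j, ContDiffOn ℝ (⊤ : ℕ∞) (W i j) U)
    (hΓ : ∀ i j k, ContDiffOn ℝ (⊤ : ℕ∞) (Γ i j k) U)
    (hΓt : ∀ i j k, ContDiffOn ℝ (⊤ : ℕ∞) (Γt i j k) U)
    (hΓsym : ∀ i j k, Γ i j k = Γ i k j)
    (hΓtsym : ∀ i j k, Γt i j k = Γt i k j)
    (hcsym : ∀ i j k, c i j k = c i k j)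
    (hassoc : ∀ i j k t, ∀ x ∈ U,
      (∑ s, c s i j x * c t s k x) = ∑ s, c s j k x * c t s i x)
    -- Γ̃ − Γ = c-multiple of W
    (hdiff : ∀ l i j, ∀ x ∈ U,
      Γt l i j x - Γ l i j x = ∑ mm, c mm i j x * W l mm x) :
    (∀ i j k, ∀ x ∈ U,
        pd k (fun y => ∑ t, c i j t y * X t y) x
          + ∑ s, (Γ i k s x * (∑ t, c s j t x * X t x)
              - Γ s k j x * (∑ t, c i s t x * X t x))
        = pd j (fun y => ∑ t, c i k t y * X t y) x
          + ∑ s, (Γ i j s x * (∑ t, c s k t x * X t x)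
              - Γ s j k x * (∑ t, c i s t x * X t x)))
    ↔ (∀ i j k, ∀ x ∈ U,
        pd k (fun y => ∑ t, c i j t y * X t y) x
          + ∑ s, (Γt i k s x * (∑ t, c s j t x * X t x)
              - Γt s k j x * (∑ t, c i s t x * X t x))
        = pd j (fun y => ∑ t, c i k t y * X t y) x
          + ∑ s, (Γt i j s x * (∑ t, c s k t x * X t x)
              - Γt s j k x * (∑ t, c i s t x * X t x))) := by
  have key : ∀ i j k, ∀ x ∈ U,
      (∑ s, (Γt i k s x * (∑ t, c s j t x * X t x)
          - Γt s k j x * (∑ t, c i s t x * X t x)))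
      - (∑ s, (Γ i k s x * (∑ t, c s j t x * X t x)
          - Γ s k j x * (∑ t, c i s t x * X t x)))
      = (∑ s, (Γt i j s x * (∑ t, c s k t x * X t x)
          - Γt s j k x * (∑ t, c i s t x * X t x)))
      - (∑ s, (Γ i j s x * (∑ t, c s k t x * X t x)
          - Γ s j k x * (∑ t, c i s t x * X t x))) := by
    intro i j k x hx
    have rearr : ∀ (f : Fin n → Fin n → Fin n → ℝ),
        ∑ s, ∑ m, ∑ t, f s m t = ∑ m, ∑ t, ∑ s, f s m t := by
      intro f
      rw [Finset.sum_comm]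
      exact Finset.sum_congr rfl fun m _ => Finset.sum_comm
    have inner : ∀ j k m t,
        (∑ s, c m k s x * c s j t x) = ∑ s, c s k j x * c m s t x := by
      intro j k m t
      calc ∑ s, c m k s x * c s j t x
          = ∑ s, c s j t x * c m s k x := by
            refine Finset.sum_congr rfl fun s _ => ?_
            rw [hcsym m k s]; ring
        _ = ∑ s, c s t k x * c m s j x := hassoc j t k m x hx
        _ = ∑ s, c s k j x * c m s t x := hassoc t k j m x hx
    have hA : ∀ j k,
        (∑ s, (∑ m, c m k s x * W i m x) * (∑ t, c s j t x * X t x))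
        = ∑ m, ∑ t, W i m x * X t x * ∑ s, c s k j x * c m s t x := by
      intro j k
      calc (∑ s, (∑ m, c m k s x * W i m x) * (∑ t, c s j t x * X t x))
          = ∑ s, ∑ t, ∑ m, c m k s x * W i m x * (c s j t x * X t x) := by
            simp only [Finset.sum_mul, Finset.mul_sum]
        _ = ∑ s, ∑ m, ∑ t, c m k s x * W i m x * (c s j t x * X t x) := by
            exact Finset.sum_congr rfl fun s _ => Finset.sum_comm
        _ = ∑ m, ∑ t, ∑ s, c m k s x * W i m x * (c s j t x * X t x) := rearr _
        _ = ∑ m, ∑ t, W i m x * X t x * ∑ s, c m k s x * c s j t x := by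
            refine Finset.sum_congr rfl fun m _ => Finset.sum_congr rfl fun t _ => ?_
            rw [Finset.mul_sum]
            exact Finset.sum_congr rfl fun s _ => by ring
        _ = ∑ m, ∑ t, W i m x * X t x * ∑ s, c s k j x * c m s t x := by
            refine Finset.sum_congr rfl fun m _ => Finset.sum_congr rfl fun t _ => ?_
            rw [inner]
    have e1 : ∀ j k,
        (∑ s, (Γt i k s x * (∑ t, c s j t x * X t x)
            - Γt s k j x * (∑ t, c i s t x * X t x)))
        - (∑ s, (Γ i k s x * (∑ t, c s j t x * X t x)
            - Γ s k j x * (∑ t, c i s t x * X t x)))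
        = (∑ s, (∑ m, c m k s x * W i m x) * (∑ t, c s j t x * X t x))
          - (∑ s, (∑ m, c m k j x * W s m x) * (∑ t, c i s t x * X t x)) := by
      intro j k
      rw [← Finset.sum_sub_distrib, ← Finset.sum_sub_distrib]
      refine Finset.sum_congr rfl fun s _ => ?_
      have h1 := hdiff i k s x hx
      have h2 := hdiff s k j x hx
      linear_combination (∑ t, c s j t x * X t x) * h1
        - (∑ t, c i s t x * X t x) * h2
    rw [e1 j k, e1 k j, hA j k, hA k j]
    have hB : (∑ s, (∑ m, c m k j x * W s m x) * (∑ t, c i s t x * X t x))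
        = ∑ s, (∑ m, c m j k x * W s m x) * (∑ t, c i s t x * X t x) := by
      refine Finset.sum_congr rfl fun s _ => ?_
      rw [show (∑ m, c m k j x * W s m x) = ∑ m, c m j k x * W s m x from
        Finset.sum_congr rfl fun m _ => by rw [hcsym m k j]]
    have hC : (∑ m, ∑ t, W i m x * X t x * ∑ s, c s k j x * c m s t x)
        = ∑ m, ∑ t, W i m x * X t x * ∑ s, c s j k x * c m s t x := by
      refine Finset.sum_congr rfl fun m _ => Finset.sum_congr rfl fun t _ => ?_
      rw [show (∑ s, c s k j x * c m s t x) = ∑ s, c s j k x * c m s t x from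
        Finset.sum_congr rfl fun s _ => by rw [hcsym s k j]]
    rw [hB, hC]
  constructor
  · intro h i j k x hx
    have h0 := h i j k x hx
    have hk := key i j k x hx
    linarith
  · intro h i j k x hx
    have h0 := h i j k x hx
    have hk := key i j k x hx
    linarith
end
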